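/- arXiv:1308.4490 — 3 statements merged into one kernel-verified Lean document; each statement's English description precedes it below -/
import Mathlib

section
/- Let k be an algebraically closed field and r ≥ 1 an integer. The k-algebra homomorphism φ : k⟦X₁,X₂,X₃⟧ → k⟦u,v⟧ given by substituting X₁ ↦ u^r, X₂ ↦ v^r and X₃ ↦ u·v (this substitution is well defined because the series u^r, v^r and u·v have zero constant term) has kernel exactly the ideal generated by X₁·X₂ − X₃^r. In particular the induced map C_r → k⟦u,v⟧ is injective. -/
/-!
Both monomials of `g = X₁X₂ - X₃^r` map to `u^r v^r`, so `g` lies in the kernel. Conversely,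
every `f` can be divided by `g` as `f = g q + h`, where the coefficient of `h` at
`X₁^a X₂^b X₃^c` is zero if `a, b ≥ 1` and is otherwise the sum of the coefficients of `f` along
the ray `(a, b, c) + t (1, 1, -r)`. Since `X₁^a X₂^b X₃^c ↦ u^(ra+c) v^(rb+c)`, among the
monomials mapping to a given `u^i v^j` exactly one has `a = 0` or `b = 0`, namely the one with
`c = min i j`. Hence `φ h = 0` forces `h = 0`, and `f ∈ (g)` whenever `φ f = 0`.
-/

open MvPowerSeries

/-- The relation `X₁·X₂ − X₃^r` in the formal power series ring `k⟦X₁,X₂,X₃⟧`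
(variables indexed by `0, 1, 2`). -/
noncomputable def nodalRelation (k : Type) [Field k] (r : ℕ) :
    Ideal (MvPowerSeries (Fin 3) k) :=
  Ideal.span {MvPowerSeries.X 0 * MvPowerSeries.X 1 - MvPowerSeries.X 2 ^ r}

/-- `φ : k⟦X₁,X₂,X₃⟧ → k⟦u,v⟧` is the substitution homomorphism `X₁ ↦ u^r`, `X₂ ↦ v^r`,
`X₃ ↦ u·v` iff its coefficients obey the substitution formula: the coefficient of `u^i v^j`
in `φ f` is the sum of the coefficients of `f` at all monomials `X₁^{m₁} X₂^{m₂} X₃^{m₃}` with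
`r·m₁ + m₃ = i` and `r·m₂ + m₃ = j`. -/
def IsSubstHom (k : Type) [Field k] (r : ℕ)
    (φ : MvPowerSeries (Fin 3) k →ₐ[k] MvPowerSeries (Fin 2) k) : Prop :=
  ∀ (f : MvPowerSeries (Fin 3) k) (d : Fin 2 →₀ ℕ),
    MvPowerSeries.coeff (R := k) d (φ f) =
      ∑ m ∈ Finset.range (min (d 0) (d 1) + 1),
        if r ∣ (d 0 - m) ∧ r ∣ (d 1 - m) then
          MvPowerSeries.coeff (R := k)
            (Finsupp.single 0 ((d 0 - m) / r) + Finsupp.single 1 ((d 1 - m) / r) +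
              Finsupp.single 2 m) f
        else 0

namespace NodalRelation

noncomputable def triple (a b c : ℕ) : Fin 3 →₀ ℕ :=
  Finsupp.single 0 a + Finsupp.single 1 b + Finsupp.single 2 c

noncomputable def pair (i j : ℕ) : Fin 2 →₀ ℕ :=
  Finsupp.single 0 i + Finsupp.single 1 j

@[simp] lemma triple_apply_zero (a b c : ℕ) : triple a b c 0 = a := by simp [triple]
@[simp] lemma triple_apply_one (a b c : ℕ) : triple a b c 1 = b := by simp [triple]
@[simp] lemma triple_apply_two (a b c : ℕ) : triple a b c 2 = c := by simp [triple]
@[simp] lemma pair_apply_zero (i j : ℕ) : pair i j 0 = i := by simp [pair]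
@[simp] lemma pair_apply_one (i j : ℕ) : pair i j 1 = j := by simp [pair]

lemma exists_triple_eq (e : Fin 3 →₀ ℕ) : ∃ a b c, triple a b c = e :=
  ⟨e 0, e 1, e 2, by ext i; fin_cases i <;> simp⟩

lemma eq_pair (d : Fin 2 →₀ ℕ) : d = pair (d 0) (d 1) := by
  ext i; fin_cases i <;> simp

lemma triple_inj {a b c a' b' c' : ℕ} :
    triple a b c = triple a' b' c' ↔ a = a' ∧ b = b' ∧ c = c' := by
  refine ⟨fun h => ?_, by rintro ⟨rfl, rfl, rfl⟩; rfl⟩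
  exact ⟨by simpa using DFunLike.congr_fun h 0, by simpa using DFunLike.congr_fun h 1,
    by simpa using DFunLike.congr_fun h 2⟩

lemma triple_le_triple {a b c a' b' c' : ℕ} :
    triple a' b' c' ≤ triple a b c ↔ a' ≤ a ∧ b' ≤ b ∧ c' ≤ c := by
  refine ⟨fun h => ⟨by simpa using h 0, by simpa using h 1, by simpa using h 2⟩, ?_⟩
  rintro ⟨h0, h1, h2⟩ i
  fin_cases i <;> simpa

lemma triple_sub_triple (a b c a' b' c' : ℕ) :
    triple a b c - triple a' b' c' = triple (a - a') (b - b') (c - c') := by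
  ext i; fin_cases i <;> simp

variable {R : Type*} [CommRing R]

lemma X_zero_mul_X_one : (X 0 * X 1 : MvPowerSeries (Fin 3) R) = monomial (triple 1 1 0) 1 := by
  rw [X_def, X_def, monomial_mul_monomial, one_mul]; congr 1; simp [triple]

lemma X_two_pow (r : ℕ) : (X 2 ^ r : MvPowerSeries (Fin 3) R) = monomial (triple 0 0 r) 1 := by
  rw [X_pow_eq]; congr 1; simp [triple]

lemma coeff_triple_monomial_mul (q : MvPowerSeries (Fin 3) R) (a b c a' b' c' : ℕ) :
    coeff (triple a b c) (monomial (triple a' b' c') 1 * q) =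
      if a' ≤ a ∧ b' ≤ b ∧ c' ≤ c then coeff (triple (a - a') (b - b') (c - c')) q else 0 := by
  simp only [coeff_monomial_mul, triple_le_triple, triple_sub_triple, one_mul]

noncomputable def raySum (r : ℕ) (f : MvPowerSeries (Fin 3) R) (a b c : ℕ) : R :=
  ∑ t ∈ Finset.range (c / r + 1), coeff (triple (a + t) (b + t) (c - r * t)) f

lemma raySum_eq (f : MvPowerSeries (Fin 3) R) {r : ℕ} (hr : 0 < r) (a b c : ℕ) :
    raySum r f a b c =
      coeff (triple a b c) f + if r ≤ c then raySum r f (a + 1) (b + 1) (c - r) else 0 := by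
  rw [raySum, Finset.sum_range_succ']
  split_ifs with hc
  · rw [add_comm, raySum, Nat.div_eq_sub_div hr hc]
    congr 1
    refine Finset.sum_congr rfl fun t _ => ?_
    congr 2; grind
  · simp [Nat.div_eq_of_lt (not_le.mp hc)]

noncomputable def nodalQuotient (r : ℕ) (f : MvPowerSeries (Fin 3) R) :
    MvPowerSeries (Fin 3) R :=
  fun e => raySum r f (e 0 + 1) (e 1 + 1) (e 2)

noncomputable def nodalRemainder (r : ℕ) (f : MvPowerSeries (Fin 3) R) :
    MvPowerSeries (Fin 3) R :=
  fun e => if 1 ≤ e 0 ∧ 1 ≤ e 1 then 0 else raySum r f (e 0) (e 1) (e 2)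

@[simp] lemma coeff_nodalQuotient (r : ℕ) (f : MvPowerSeries (Fin 3) R) (a b c : ℕ) :
    coeff (triple a b c) (nodalQuotient r f) = raySum r f (a + 1) (b + 1) c := by
  simp [nodalQuotient, coeff_apply]

@[simp] lemma coeff_nodalRemainder (r : ℕ) (f : MvPowerSeries (Fin 3) R) (a b c : ℕ) :
    coeff (triple a b c) (nodalRemainder r f) =
      if 1 ≤ a ∧ 1 ≤ b then 0 else raySum r f a b c := by
  simp [nodalRemainder, coeff_apply]

lemma eq_mul_nodalQuotient_add_nodalRemainder (f : MvPowerSeries (Fin 3) R) {r : ℕ}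
    (hr : 0 < r) :
    f = (X 0 * X 1 - X 2 ^ r) * nodalQuotient r f + nodalRemainder r f := by
  ext e
  obtain ⟨a, b, c, rfl⟩ := exists_triple_eq e
  rw [map_add, sub_mul, map_sub, X_zero_mul_X_one, X_two_pow, coeff_triple_monomial_mul,
    coeff_triple_monomial_mul, coeff_nodalQuotient, coeff_nodalQuotient, coeff_nodalRemainder]
  by_cases hab : 1 ≤ a ∧ 1 ≤ b
  · simp only [hab, Nat.sub_add_cancel, Nat.sub_zero, zero_le, true_and, if_true, add_zero]
    rw [raySum_eq f hr a b c]
    ring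
  · simp [hab, raySum_eq f hr a b c]

lemma eq_mul_add_of_dvd_sub_of_div_eq {r d m a : ℕ} (hr : 0 < r) (hdvd : r ∣ d - m) (hm : m ≤ d)
    (hdiv : (d - m) / r = a) : d = r * a + m := by
  rw [Nat.div_eq_iff_eq_mul_left hr hdvd] at hdiv
  lia

namespace IsSubstHom

variable {k : Type} [Field k] {r : ℕ} {φ : MvPowerSeries (Fin 3) k →ₐ[k] MvPowerSeries (Fin 2) k}

lemma coeff_map_eq_sum (hφ : IsSubstHom k r φ) (f : MvPowerSeries (Fin 3) k) (d : Fin 2 →₀ ℕ) :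
    coeff d (φ f) = ∑ m ∈ Finset.range (min (d 0) (d 1) + 1),
      if r ∣ d 0 - m ∧ r ∣ d 1 - m then coeff (triple ((d 0 - m) / r) ((d 1 - m) / r) m) f
      else 0 :=
  hφ f d

lemma map_monomial (hφ : IsSubstHom k r φ) (hr : 0 < r) (a b c : ℕ) :
    φ (monomial (triple a b c) 1) = monomial (pair (r * a + c) (r * b + c)) 1 := by
  ext d
  rw [coeff_map_eq_sum hφ, coeff_monomial]
  by_cases hd : d = pair (r * a + c) (r * b + c)
  · subst hd
    rw [if_pos rfl, Finset.sum_eq_single_of_mem c (by simp)]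
    · simp [hr.ne']
    · intro m _ hmc
      simp [coeff_monomial, triple_inj, hmc]
  · rw [if_neg hd]
    refine Finset.sum_eq_zero fun m hm => ?_
    simp only [Finset.mem_range] at hm
    split_ifs with hdvd
    · rw [coeff_monomial, if_neg]
      intro h
      obtain ⟨ha, hb, rfl⟩ := triple_inj.mp h
      have h0 := eq_mul_add_of_dvd_sub_of_div_eq hr hdvd.1 (by omega) ha
      have h1 := eq_mul_add_of_dvd_sub_of_div_eq hr hdvd.2 (by omega) hb
      exact hd (by rw [eq_pair d, h0, h1])
    · rfl

lemma map_X_zero_mul_X_one_sub_X_two_pow (hφ : IsSubstHom k r φ) (hr : 0 < r) :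
    φ (X 0 * X 1 - X 2 ^ r) = 0 := by
  rw [map_sub, X_zero_mul_X_one, X_two_pow, map_monomial hφ hr, map_monomial hφ hr, sub_eq_zero]
  simp

lemma eq_zero_of_map_eq_zero (hφ : IsSubstHom k r φ) (hr : 0 < r) {h : MvPowerSeries (Fin 3) k}
    (hh : ∀ a b c, 1 ≤ a → 1 ≤ b → coeff (triple a b c) h = 0) (hφh : φ h = 0) : h = 0 := by
  ext e
  obtain ⟨a, b, c, rfl⟩ := exists_triple_eq e
  rw [map_zero]
  by_cases hab : 1 ≤ a ∧ 1 ≤ b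
  · exact hh a b c hab.1 hab.2
  have hmin : min (r * a + c) (r * b + c) = c := by
    rcases (by omega : a = 0 ∨ b = 0) with rfl | rfl <;> simp
  have hcoeff := coeff_map_eq_sum hφ h (pair (r * a + c) (r * b + c))
  rw [hφh, map_zero] at hcoeff
  simp only [pair_apply_zero, pair_apply_one, hmin] at hcoeff
  rw [Finset.sum_eq_single_of_mem c (by simp)] at hcoeff
  · simpa [hr.ne'] using hcoeff.symm
  · -- a term with `m < c` reads off a coefficient at a monomial divisible by `X₁X₂`
    intro m hm hmc
    simp only [Finset.mem_range] at hm
    split_ifs with hdvd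
    · refine hh _ _ _ ?_ ?_
      · rw [Nat.one_le_div_iff hr]; exact Nat.le_of_dvd (by omega) hdvd.1
      · rw [Nat.one_le_div_iff hr]; exact Nat.le_of_dvd (by omega) hdvd.2
    · rfl

end IsSubstHom
end NodalRelation

open NodalRelation

theorem ker_substHom_general (k : Type) [Field k] (r : ℕ) (hr : 1 ≤ r)
    (φ : MvPowerSeries (Fin 3) k →ₐ[k] MvPowerSeries (Fin 2) k)
    (hφ : IsSubstHom k r φ) :
    RingHom.ker (φ : MvPowerSeries (Fin 3) k →+* MvPowerSeries (Fin 2) k) =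
      nodalRelation k r := by
  have hg : φ (X 0 * X 1 - X 2 ^ r) = 0 := IsSubstHom.map_X_zero_mul_X_one_sub_X_two_pow hφ hr
  refine le_antisymm (fun f hf => ?_) ?_
  · replace hf : φ f = 0 := hf
    have hdiv := eq_mul_nodalQuotient_add_nodalRemainder f hr
    have hrem : φ (nodalRemainder r f) = 0 := by
      simpa [hg, hf, eq_comm] using congrArg φ hdiv
    rw [hdiv, IsSubstHom.eq_zero_of_map_eq_zero hφ hr (by simp +contextual) hrem, add_zero]
    exact Ideal.mul_mem_right _ _ (Ideal.subset_span rfl)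
  · rw [nodalRelation, Ideal.span_le, Set.singleton_subset_iff]
    exact hg

/-- The kernel of the substitution homomorphism `φ : k⟦X₁,X₂,X₃⟧ → k⟦u,v⟧`,
`X₁ ↦ u^r`, `X₂ ↦ v^r`, `X₃ ↦ u·v`, is exactly the ideal generated by `X₁·X₂ − X₃^r`.
In particular the induced map `C_r → k⟦u,v⟧` is injective. -/
theorem ker_substHom (k : Type) [Field k] [IsAlgClosed k] (r : ℕ) (hr : 1 ≤ r)
    (φ : MvPowerSeries (Fin 3) k →ₐ[k] MvPowerSeries (Fin 2) k)
    (hφ : IsSubstHom k r φ) :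
    RingHom.ker (φ : MvPowerSeries (Fin 3) k →+* MvPowerSeries (Fin 2) k) =
      nodalRelation k r :=
  ker_substHom_general k r hr φ hφ
end

section
/- Let k be an algebraically closed field, r ≥ 1 and a ≥ 1 integers. The ideal I_a = (x₁, x₃^a) of C_r = k⟦X₁,X₂,X₃⟧ ⧸ (X₁·X₂ − X₃^r), regarded as a C_r-module, is reflexive: the canonical evaluation map from I_a to the dual of its dual module is bijective (Module.IsReflexive C_r I_a). (These two-generator ideals are the reflexive local models appearing in Lemma 4.1 of the paper.) -/
/-- The local ring `C_r = k⟦X₁,X₂,X₃⟧ ⧸ (X₁·X₂ − X₃^r)` of the A-type surface singularity. -/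
abbrev Cring (k : Type) [Field k] (r : ℕ) : Type :=
  MvPowerSeries (Fin 3) k ⧸ nodalRelation k r

/-- `x₁`, the image of `X₁` in `C_r`. -/
noncomputable def xone (k : Type) [Field k] (r : ℕ) : Cring k r :=
  Ideal.Quotient.mk (nodalRelation k r) (MvPowerSeries.X 0)

/-- `x₃`, the image of `X₃` in `C_r`. -/
noncomputable def xthree (k : Type) [Field k] (r : ℕ) : Cring k r :=
  Ideal.Quotient.mk (nodalRelation k r) (MvPowerSeries.X 2)

/-- The two-generator ideal `I_a = (x₁, x₃^a)` of `C_r`. -/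
noncomputable def Iideal (k : Type) [Field k] (r a : ℕ) : Ideal (Cring k r) :=
  Ideal.span {xone k r, xthree k r ^ a}

/-!
If `a + b = r`, then `I_a I_b ⊆ (x₁)` because `x₃ ^ r = x₁ x₂`, and `x₁` is a non-zero-divisor,
so `(s, t) ↦ s t / x₁` is a bilinear pairing `I_a × I_b → C_r`. It is perfect: a functional `φ`
on `I_b` is determined by `u = φ x₁` and `v = φ x₃ ^ b`, which satisfy `x₃ ^ b u = x₁ v`, and
since `X₁` is prime and does not divide `X₃` this forces `u ∈ I_a`, with `φ = (u · -) / x₁`.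
Exchanging `a` and `b`, each of `I_a`, `I_b` is the dual of the other, so both are reflexive;
for `a ≥ r` one has `I_a = I_r`. All this only needs `X₁` to be a prime not dividing `X₃` in
a ring without zero divisors, so it is carried out in `R ⧸ (x y - z ^ r)` for any such `R`.
-/

namespace MvPowerSeries

variable {σ R : Type*} [CommSemiring R]

theorem X_dvd_iff_one_le_weightedOrder [DecidableEq σ] (s : σ) (φ : MvPowerSeries σ R) :
    X s ∣ φ ↔ 1 ≤ φ.weightedOrder (Pi.single s 1) := by
  rw [X_dvd_iff]
  constructor
  · intro h
    refine nat_le_weightedOrder _ fun d hd => h d ?_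
    rwa [Finsupp.weight_single_one_apply, Nat.lt_one_iff] at hd
  · intro h d hd
    refine coeff_eq_zero_of_lt_weightedOrder _ (lt_of_lt_of_le ?_ h)
    rw [Finsupp.weight_single_one_apply, hd]
    exact Nat.cast_lt.mpr one_pos

variable [Nontrivial R]

theorem X_not_dvd_X {i j : σ} (hij : i ≠ j) : ¬ (X i : MvPowerSeries σ R) ∣ X j := by
  classical
  intro h
  simpa [Finsupp.single_apply, hij.symm] using X_dvd_iff.mp h (Finsupp.single j 1)

theorem prime_X [NoZeroDivisors R] (s : σ) : Prime (X s : MvPowerSeries σ R) := by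
  classical
  refine ⟨fun h => ?_, fun hu => ?_, fun φ ψ h => ?_⟩
  · simpa using congrArg (coeff (Finsupp.single s 1)) h
  · simpa using X_dvd_iff.mp (isUnit_iff_dvd_one.mp hu) 0 rfl
  · simp only [X_dvd_iff_one_le_weightedOrder, weightedOrder_mul, Order.one_le_iff_ne_zero] at h ⊢
    by_contra! h'
    simp [h'.1, h'.2] at h

end MvPowerSeries

theorem Prime.not_dvd_mul_sub_pow {R : Type*} [CommRing R] {x z : R} (hx : Prime x)
    (hxz : ¬ x ∣ z) {y : R} {r : ℕ} : ¬ x ∣ x * y - z ^ r :=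
  fun h => hxz (hx.dvd_of_dvd_pow ((dvd_sub_right (dvd_mul_right x y)).mp h))

theorem Ideal.Quotient.isLeftRegular_mk_of_prime {R : Type*} [CommRing R] [NoZeroDivisors R]
    {p f : R} (hp : Prime p) (hpf : ¬ p ∣ f) :
    IsLeftRegular (Ideal.Quotient.mk (Ideal.span {f}) p) := by
  intro u v huv
  obtain ⟨U, rfl⟩ := Ideal.Quotient.mk_surjective u
  obtain ⟨V, rfl⟩ := Ideal.Quotient.mk_surjective v
  obtain ⟨W, hW⟩ : f ∣ p * (U - V) := by
    rw [← Ideal.mem_span_singleton, mul_sub, ← Ideal.Quotient.eq]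
    exact huv
  obtain ⟨W', rfl⟩ := (hp.dvd_or_dvd ⟨U - V, hW.symm⟩).resolve_left hpf
  rw [Ideal.Quotient.eq, Ideal.mem_span_singleton]
  exact ⟨W', mul_left_cancel₀ hp.ne_zero (by rw [hW]; ring)⟩

section DivPairing

variable {S : Type*} [CommRing S] {e : S} (he : IsLeftRegular e) {I J : Ideal S}
  (hIJ : I * J ≤ Ideal.span {e})

noncomputable def divPairing : I →ₗ[S] J →ₗ[S] S :=
  LinearMap.codRestrict₂ ((LinearMap.mul S S).domRestrict₁₂ I J) (LinearMap.mulLeft S e) he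
    fun s t => by
      obtain ⟨c, hc⟩ := Ideal.mem_span_singleton.mp (hIJ (Ideal.mul_mem_mul s.2 t.2))
      exact ⟨c, hc.symm⟩

theorem mul_divPairing (s : I) (t : J) : e * divPairing he hIJ s t = s * t :=
  LinearMap.codRestrict₂_apply _ (LinearMap.mulLeft S e) he _ s t

theorem divPairing_apply_self (s : I) (heJ : e ∈ J) : divPairing he hIJ s ⟨e, heJ⟩ = s :=
  he.eq_iff.mp (by rw [mul_divPairing, mul_comm])

theorem divPairing_injective (heJ : e ∈ J) : Function.Injective (divPairing he hIJ) :=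
  fun s s' h => Subtype.ext <| by
    rw [← divPairing_apply_self he hIJ s heJ, h, divPairing_apply_self]

theorem divPairing_flip :
    (divPairing he hIJ).flip = divPairing he ((mul_comm J I).trans_le hIJ) := by
  ext t s
  exact he.eq_iff.mp (by rw [LinearMap.flip_apply, mul_divPairing, mul_divPairing, mul_comm])

end DivPairing

section SpanPair

variable {R : Type*} [CommRing R] {x y z : R} {r a b : ℕ}

local notation "π" => Ideal.Quotient.mk (Ideal.span {x * y - z ^ r})

theorem mk_pow_eq_mk_mul_mk : π z ^ r = π x * π y := by
  rw [← map_pow, ← map_mul, Ideal.Quotient.eq, Ideal.mem_span_singleton]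
  exact ⟨-1, by ring⟩

theorem span_pair_mul_span_pair_le (hab : a + b = r) :
    Ideal.span {π x, π z ^ a} * Ideal.span {π x, π z ^ b} ≤ Ideal.span {π x} := by
  rw [Ideal.span_mul_span', Ideal.span_le]
  rintro _ ⟨s, hs, t, ht, rfl⟩
  dsimp only
  simp only [Set.mem_insert_iff, Set.mem_singleton_iff] at hs ht
  rw [SetLike.mem_coe, Ideal.mem_span_singleton]
  rcases hs with rfl | rfl
  · exact dvd_mul_right _ _
  rcases ht with rfl | rfl
  · exact dvd_mul_left _ _
  rw [← pow_add, hab, mk_pow_eq_mk_mul_mk]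
  exact dvd_mul_right _ _

theorem span_pair_pow_eq_of_le (h : r ≤ a) :
    Ideal.span {π x, π z ^ a} = Ideal.span {π x} := by
  refine le_antisymm ?_ (Ideal.span_mono (Set.singleton_subset_iff.mpr (Set.mem_insert _ _)))
  rw [Ideal.span_le, Set.insert_subset_iff, Set.singleton_subset_iff]
  refine ⟨Ideal.mem_span_singleton_self _, Ideal.mem_span_singleton.mpr ?_⟩
  rw [← Nat.add_sub_cancel' h, pow_add, mk_pow_eq_mk_mul_mk, mul_assoc]
  exact dvd_mul_right _ _

theorem span_pair_pow_min :
    Ideal.span {π x, π z ^ min a r} = Ideal.span {π x, π z ^ a} := by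
  rcases le_total a r with h | h
  · rw [min_eq_left h]
  · rw [min_eq_right h, span_pair_pow_eq_of_le h, span_pair_pow_eq_of_le le_rfl]

theorem mem_span_pair_of_pow_mul_mem (hx : Prime x) (hxz : ¬ x ∣ z) (hab : a + b = r)
    {u : R ⧸ Ideal.span {x * y - z ^ r}} (h : π z ^ b * u ∈ Ideal.span {π x}) :
    u ∈ Ideal.span {π x, π z ^ a} := by
  obtain ⟨U, rfl⟩ := Ideal.Quotient.mk_surjective u
  obtain ⟨v, hv⟩ := Ideal.mem_span_singleton.mp h
  obtain ⟨V, rfl⟩ := Ideal.Quotient.mk_surjective v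
  obtain ⟨W, hW⟩ : x * y - z ^ r ∣ z ^ b * U - x * V := by
    rw [← Ideal.mem_span_singleton, ← Ideal.Quotient.eq]
    simpa using hv
  have hdvd : x ∣ z ^ b * (U + z ^ a * W) :=
    ⟨V + y * W, by rw [← hab, pow_add] at hW; linear_combination hW⟩
  obtain ⟨T, hT⟩ := (hx.dvd_or_dvd hdvd).resolve_left fun h => hxz (hx.dvd_of_dvd_pow h)
  rw [Ideal.mem_span_pair]
  exact ⟨π T, -π W, by rw [eq_sub_of_add_eq hT, map_sub, map_mul, map_mul, map_pow]; ring⟩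

variable [NoZeroDivisors R]

theorem isLeftRegular_mk (hx : Prime x) (hxz : ¬ x ∣ z) : IsLeftRegular (π x) :=
  Ideal.Quotient.isLeftRegular_mk_of_prime hx (hx.not_dvd_mul_sub_pow hxz)

theorem divPairing_span_pair_bijective (hx : Prime x) (hxz : ¬ x ∣ z) (hab : a + b = r) :
    Function.Bijective
      (divPairing (isLeftRegular_mk (y := y) hx hxz) (span_pair_mul_span_pair_le hab)) := by
  have hxI : π x ∈ Ideal.span {π x, π z ^ b} := Ideal.subset_span (Set.mem_insert _ _)
  have hzI : π z ^ b ∈ Ideal.span {π x, π z ^ b} :=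
    Ideal.subset_span (Set.mem_insert_of_mem _ rfl)
  refine ⟨divPairing_injective _ _ hxI, fun φ => ?_⟩
  have hφ : π z ^ b * φ ⟨π x, hxI⟩ = π x * φ ⟨π z ^ b, hzI⟩ := by
    simp only [← smul_eq_mul, ← map_smul]
    exact congrArg φ (Subtype.ext (mul_comm _ _))
  have hu : φ ⟨π x, hxI⟩ ∈ Ideal.span {π x, π z ^ a} :=
    mem_span_pair_of_pow_mul_mem hx hxz hab
      (hφ ▸ Ideal.mul_mem_right _ _ (Ideal.mem_span_singleton_self _))
  refine ⟨⟨_, hu⟩, LinearMap.ext_on Submodule.span_span_coe_preimage ?_⟩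
  rintro ⟨t, ht⟩ (rfl | rfl)
  · exact divPairing_apply_self _ _ _ hxI
  · refine (isLeftRegular_mk hx hxz).eq_iff.mp ?_
    rw [mul_divPairing]
    exact (mul_comm _ _).trans hφ

theorem isReflexive_span_pair (hx : Prime x) (hxz : ¬ x ∣ z) :
    Module.IsReflexive (R ⧸ Ideal.span {x * y - z ^ r}) (Ideal.span {π x, π z ^ a}) := by
  rw [← span_pair_pow_min]
  have hab : min a r + (r - min a r) = r := Nat.add_sub_of_le (min_le_right a r)
  let B := divPairing (isLeftRegular_mk (y := y) hx hxz) (span_pair_mul_span_pair_le hab)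
  have : B.IsPerfPair := ⟨divPairing_span_pair_bijective hx hxz hab, by
    rw [divPairing_flip]
    exact divPairing_span_pair_bijective hx hxz (by omega)⟩
  exact .of_isPerfPair B

end SpanPair

theorem Iideal_isReflexive_general (k : Type) [Field k] (r a : ℕ) :
    Module.IsReflexive (Cring k r) (Iideal k r a) :=
  isReflexive_span_pair (y := MvPowerSeries.X 1) (MvPowerSeries.prime_X 0)
    (MvPowerSeries.X_not_dvd_X (by decide : (0 : Fin 3) ≠ 2))

/-- The ideal `I_a = (x₁, x₃^a)` of `C_r`, regarded as a `C_r`-module, is reflexive: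
the canonical evaluation map to its double dual is bijective. -/
theorem Iideal_isReflexive (k : Type) [Field k] [IsAlgClosed k] (r a : ℕ)
    (hr : 1 ≤ r) (ha : 1 ≤ a) :
    Module.IsReflexive (Cring k r) (Iideal k r a) :=
  Iideal_isReflexive_general k r a
end

section
/- (Presentation of the second blow-up chart, from the proof of Proposition 4.2 of the paper.) Let k be an algebraically closed field and r, a integers with 1 ≤ a ≤ r. Let K be the field of fractions of the domain C_r, and let ε₂ : P[Y] → K be the P-algebra homomorphism extending the composite P → C_r → K and sending Y to x₁ / x₃^a (note x₃ ≠ 0 in the domain C_r). Then the kernel of ε₂ is exactly the ideal of P[Y] generated by X₁ − X₃^a·Y and X₃^(r−a) − Y·X₂. Consequently the C_r-subalgebra of K generated by x₁/x₃^a is isomorphic to A₂(a) = k⟦X₁,X₂,X₃⟧[Y] ⧸ (X₁ − X₃^a·Y, X₃^(r−a) − Y·X₂). -/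
open Polynomial MvPowerSeries

/-- The ideal of `P[Y]` defining the second blow-up chart
`A₂(a) = P[Y] ⧸ (X₁ − X₃^a·Y, X₃^(r−a) − Y·X₂)`. -/
noncomputable def chartTwoRelation (k : Type) [Field k] (r a : ℕ) :
    Ideal (Polynomial (MvPowerSeries (Fin 3) k)) :=
  Ideal.span
    {Polynomial.C (MvPowerSeries.X 0) - Polynomial.C (MvPowerSeries.X 2 ^ a) * Polynomial.X,
     Polynomial.C (MvPowerSeries.X 2 ^ (r - a)) - Polynomial.X * Polynomial.C (MvPowerSeries.X 1)}

/-- The second blow-up chart `A₂(a)` of the blow-up of `Spec C_r` along `(x₁, x₃^a)`. -/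
abbrev chartTwo (k : Type) [Field k] (r a : ℕ) : Type :=
  Polynomial (MvPowerSeries (Fin 3) k) ⧸ chartTwoRelation k r a

/-!
The two relations vanish at `Y = x₁ / x₃^a`, and `X₂·(X₁ − X₃^a·Y) − X₃^a·(X₃^(r−a) − Y·X₂)` is
`X₁X₂ − X₃^r`, so the relation ideal contains all constants of the kernel. Conversely, let `f` of
degree `d` lie in the kernel. Clearing denominators, `∑ fᵢ X₁^i X₃^(a(d−i))` lies in
`(X₁X₂ − X₃^r) ⊆ (X₂, X₃^a)`; modulo this monomial ideal the sum is `f_d X₁^d`, and `X₁` is a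
nonzerodivisor there, so `f_d = αX₂ + βX₃^a`. Modulo the relations `f_d Y ≡ αX₃^(r−a) + βX₁`,
which trades the leading term of `f` for terms of lower degree; induct on `d`. The isomorphism
is the first isomorphism theorem, as the image of `ε₂` is the `C_r`-algebra generated by
`x₁ / x₃^a`.
-/

namespace MvPowerSeries

variable {σ R : Type*} [CommRing R]

theorem mem_span_X_X_pow_iff (i j : σ) (a : ℕ) (u : MvPowerSeries σ R) :
    u ∈ Ideal.span {X i, X j ^ a} ↔ ∀ m : σ →₀ ℕ, m i = 0 → m j < a → coeff m u = 0 := by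
  classical
  constructor
  · rintro hu m hmi hmj
    obtain ⟨c, d, rfl⟩ := Ideal.mem_span_pair.mp hu
    have hXi : X i ^ 1 ∣ c * X i := by rw [pow_one]; exact dvd_mul_left _ _
    have hXj : X j ^ a ∣ d * X j ^ a := dvd_mul_left _ _
    rw [map_add, X_pow_dvd_iff.mp hXi m (by omega), X_pow_dvd_iff.mp hXj m hmj, add_zero]
  · intro hu
    let v : MvPowerSeries σ R := fun m => if m i = 0 then coeff m u else 0
    have hv : X j ^ a ∣ v := X_pow_dvd_iff.mpr fun m hm => by
      change (if m i = 0 then coeff m u else 0) = 0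
      split_ifs with hmi
      exacts [hu m hmi hm, rfl]
    have huv : X i ^ 1 ∣ u - v := X_pow_dvd_iff.mpr fun m hm => by
      change coeff m u - (if m i = 0 then coeff m u else 0) = 0
      rw [if_pos (by omega), sub_self]
    obtain ⟨c, hc⟩ := huv
    obtain ⟨d, hd⟩ := hv
    exact Ideal.mem_span_pair.mpr
      ⟨c, d, by rw [mul_comm c, mul_comm d, ← pow_one (X i), ← hc, ← hd, sub_add_cancel]⟩

theorem X_pow_mul_mem_span_X_X_pow_iff {i j l : σ} (hli : l ≠ i) (hlj : l ≠ j) (a d : ℕ)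
    (u : MvPowerSeries σ R) :
    X l ^ d * u ∈ Ideal.span {X i, X j ^ a} ↔ u ∈ Ideal.span {X i, X j ^ a} := by
  refine ⟨fun h => ?_, Ideal.mul_mem_left _ _⟩
  rw [mem_span_X_X_pow_iff] at h ⊢
  intro m hmi hmj
  have hshift := h (Finsupp.single l d + m) (by simp [hli.symm, hmi]) (by simp [hlj.symm, hmj])
  rwa [X_pow_eq, coeff_add_monomial_mul, one_mul] at hshift

theorem X_notMem_span_X_X_pow [Nontrivial R] {i j l : σ} (hli : l ≠ i) (hlj : l ≠ j) {a : ℕ}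
    (ha : a ≠ 0) : (X l : MvPowerSeries σ R) ∉ Ideal.span {X i, X j ^ a} := by
  classical
  rw [mem_span_X_X_pow_iff]
  intro h
  have := h (Finsupp.single l 1) (by simp [hli]) (by simp [hlj]; omega)
  simp [coeff_X] at this

end MvPowerSeries

namespace Polynomial

variable {R S : Type*} [CommRing R] [CommRing S]

theorem leadingCoeff_mul_pow_mem_of_eval_scaleRoots_mem {J : Ideal R} {s : R} (hs : s ∈ J)
    (p : R[X]) (x : R) (h : (p.scaleRoots s).eval x ∈ J) :
    p.leadingCoeff * x ^ p.natDegree ∈ J := by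
  by_cases hlead : p.leadingCoeff ∈ J
  · exact J.mul_mem_right _ hlead
  rw [← Ideal.Quotient.eq_zero_iff_mem] at hs hlead h ⊢
  rw [← eval₂_hom, ← eval_map, map_scaleRoots _ _ _ hlead, hs, scaleRoots_zero,
    leadingCoeff_map_of_leadingCoeff_ne_zero _ hlead,
    natDegree_map_of_leadingCoeff_ne_zero _ hlead] at h
  simpa using h

theorem natDegree_sub_C_mul_X_pow_sub_lt (f : R[X]) (hf : f.natDegree ≠ 0) (c : R) :
    (f - X ^ (f.natDegree - 1) * (C f.leadingCoeff * X - C c)).natDegree < f.natDegree := by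
  have hsplit : f - X ^ (f.natDegree - 1) * (C f.leadingCoeff * X - C c) =
      f.eraseLead + C c * X ^ (f.natDegree - 1) := by
    have hf_eq := f.eraseLead_add_C_mul_X_pow
    obtain ⟨n, hn⟩ : ∃ n, f.natDegree = n + 1 := ⟨_, (Nat.succ_pred_eq_of_ne_zero hf).symm⟩
    rw [hn] at hf_eq
    rw [hn, Nat.add_sub_cancel]
    linear_combination -hf_eq
  rw [hsplit]
  refine (natDegree_add_le _ _).trans_lt (max_lt ?_ ?_)
  · exact f.eraseLead_natDegree_le.trans_lt (by omega)
  · exact (natDegree_C_mul_X_pow_le _ _).trans_lt (by omega)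

theorem ker_eq_of_leadingCoeff_reducible (φ : R[X] →+* S) {I : Ideal R[X]}
    (hI : I ≤ RingHom.ker φ) (hC : ∀ c, φ (C c) = 0 → C c ∈ I)
    (hlead : ∀ f ∈ RingHom.ker φ, ∃ c, C f.leadingCoeff * X - C c ∈ I) :
    RingHom.ker φ = I := by
  refine le_antisymm (fun f hf => ?_) hI
  induction hd : f.natDegree using Nat.strong_induction_on generalizing f with
  | _ d ih =>
    by_cases hd0 : d = 0
    · rw [eq_C_of_natDegree_eq_zero (hd.trans hd0)] at hf ⊢
      exact hC _ hf
    obtain ⟨c, hc⟩ := hlead f hf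
    have hg : X ^ (f.natDegree - 1) * (C f.leadingCoeff * X - C c) ∈ I := I.mul_mem_left _ hc
    have hlt := natDegree_sub_C_mul_X_pow_sub_lt f (hd ▸ hd0) c
    have hrest := ih _ (hd ▸ hlt) _ (sub_mem hf (hI hg)) rfl
    simpa using add_mem hrest hg

theorem range_eval₂RingHom_comp_eq_adjoin {T : Type*} [CommRing T] [Algebra S T] {f : R →+* S}
    (hf : Function.Surjective f) (x : T) :
    (eval₂RingHom ((algebraMap S T).comp f) x).range = (Algebra.adjoin S {x}).toSubring := by
  ext y
  rw [Subalgebra.mem_toSubring, Algebra.adjoin_singleton_eq_range_aeval]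
  constructor
  · rintro ⟨q, rfl⟩
    exact ⟨q.map f, by simp [aeval_def, eval₂_map]⟩
  · rintro ⟨p, rfl⟩
    obtain ⟨q, rfl⟩ := map_surjective f hf p
    exact ⟨q, by simp [aeval_def, eval₂_map]⟩

end Polynomial

section ChartTwo

variable {k : Type} [Field k] {r a : ℕ}

noncomputable abbrev toFrac (k : Type) [Field k] (r : ℕ) :
    MvPowerSeries (Fin 3) k →+* FractionRing (Cring k r) :=
  (algebraMap (Cring k r) (FractionRing (Cring k r))).comp (Ideal.Quotient.mk (nodalRelation k r))

theorem ker_toFrac : RingHom.ker (toFrac k r) = nodalRelation k r := by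
  rw [RingHom.ker_comp_of_injective _ (IsFractionRing.injective _ _), Ideal.mk_ker]

theorem toFrac_X_zero_mul_toFrac_X_one :
    toFrac k r (X 0) * toFrac k r (X 1) = toFrac k r (X 2) ^ r := by
  rw [← map_mul, ← map_pow, ← sub_eq_zero, ← map_sub, ← RingHom.mem_ker, ker_toFrac]
  exact Ideal.subset_span rfl

theorem nodalRelation_le_span_X_X_pow (har : a ≤ r) {i : Fin 3}
    (hi : (X i : MvPowerSeries (Fin 3) k) ∣ X 0 * X 1) :
    nodalRelation k r ≤ Ideal.span {X i, X 2 ^ a} := by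
  obtain ⟨c, hc⟩ := hi
  rw [nodalRelation, Ideal.span_le, Set.singleton_subset_iff]
  refine Ideal.mem_span_pair.mpr ⟨c, -X 2 ^ (r - a), ?_⟩
  rw [hc, neg_mul, ← pow_add, Nat.sub_add_cancel har]
  ring

theorem toFrac_X_two_ne_zero [IsDomain (Cring k r)] (hr : r ≠ 0) : toFrac k r (X 2) ≠ 0 := by
  have hne {i l : Fin 3} (hi : (X i : MvPowerSeries (Fin 3) k) ∣ X 0 * X 1) (hli : l ≠ i)
      (hl : l ≠ 2) : toFrac k r (X l) ≠ 0 := fun h =>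
    X_notMem_span_X_X_pow hli hl one_ne_zero
      (nodalRelation_le_span_X_X_pow (Nat.one_le_iff_ne_zero.mpr hr) hi
        (by rw [← ker_toFrac]; exact h))
  intro h
  have hprod := toFrac_X_zero_mul_toFrac_X_one (k := k) (r := r)
  rw [h, zero_pow hr, mul_eq_zero] at hprod
  rcases hprod with h0 | h1
  exacts [hne (dvd_mul_left _ _) (by decide) (by decide) h0,
    hne (dvd_mul_right _ _) (by decide) (by decide) h1]

variable {t : FractionRing (Cring k r)}

theorem chartTwoRelation_le_ker [IsDomain (Cring k r)] (har : a ≤ r) (hx : toFrac k r (X 2) ≠ 0)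
    (ht : toFrac k r (X 2) ^ a * t = toFrac k r (X 0)) :
    chartTwoRelation k r a ≤ RingHom.ker (eval₂RingHom (toFrac k r) t) := by
  rw [chartTwoRelation, Ideal.span_le, Set.insert_subset_iff, Set.singleton_subset_iff]
  simp only [SetLike.mem_coe, RingHom.mem_ker, coe_eval₂RingHom, eval₂_sub, eval₂_mul,
    Polynomial.eval₂_C, Polynomial.eval₂_X, Polynomial.eval₂_pow, map_pow]
  refine ⟨by rw [ht, sub_self], (mul_right_injective₀ (pow_ne_zero a hx)).eq_iff.mp ?_⟩
  rw [mul_zero, mul_sub, ← pow_add, Nat.add_sub_cancel' har, ← mul_assoc, ht,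
    toFrac_X_zero_mul_toFrac_X_one, sub_self]

theorem map_C_nodalRelation_le (har : a ≤ r) :
    (nodalRelation k r).map Polynomial.C ≤ chartTwoRelation k r a := by
  rw [nodalRelation, Ideal.map_span, Set.image_singleton, Ideal.span_le, Set.singleton_subset_iff]
  refine Ideal.mem_span_pair.mpr ⟨Polynomial.C (X 1), -Polynomial.C (X 2 ^ a), ?_⟩
  obtain ⟨b, rfl⟩ := Nat.exists_eq_add_of_le har
  simp only [Nat.add_sub_cancel_left, map_sub, map_mul, map_pow]
  ring

theorem exists_C_mul_X_sub_C_mem_chartTwoRelation {c : MvPowerSeries (Fin 3) k}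
    (hc : c ∈ Ideal.span {X 1, X 2 ^ a}) :
    ∃ c', Polynomial.C c * Polynomial.X - Polynomial.C c' ∈ chartTwoRelation k r a := by
  obtain ⟨α, β, rfl⟩ := Ideal.mem_span_pair.mp hc
  refine ⟨α * X 2 ^ (r - a) + β * X 0,
    Ideal.mem_span_pair.mpr ⟨-Polynomial.C β, -Polynomial.C α, ?_⟩⟩
  simp only [map_add, map_mul, map_pow]
  ring

theorem leadingCoeff_mem_span_of_mem_ker (har : a ≤ r)
    (ht : toFrac k r (X 2) ^ a * t = toFrac k r (X 0)) {f : (MvPowerSeries (Fin 3) k)[X]}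
    (hf : f ∈ RingHom.ker (eval₂RingHom (toFrac k r) t)) :
    f.leadingCoeff ∈ Ideal.span {X 1, X 2 ^ a} := by
  -- a lift to `P` of `x₃ ^ (a * deg f) * ε₂ f`
  have hscaled : (f.scaleRoots (X 2 ^ a)).eval (X 0) ∈ nodalRelation k r := by
    rw [← ker_toFrac, RingHom.mem_ker, ← eval₂_hom, ← ht, ← map_pow, scaleRoots_eval₂_mul,
      show eval₂ (toFrac k r) t f = 0 from hf, mul_zero]
  have hX2 : (X 2 : MvPowerSeries (Fin 3) k) ^ a ∈ Ideal.span {X 1, X 2 ^ a} :=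
    Ideal.subset_span (Set.mem_insert_of_mem _ rfl)
  have hlead := leadingCoeff_mul_pow_mem_of_eval_scaleRoots_mem hX2 f (X 0)
    (nodalRelation_le_span_X_X_pow har (i := 1) (dvd_mul_left _ _) hscaled)
  rw [mul_comm] at hlead
  exact (X_pow_mul_mem_span_X_X_pow_iff (by decide) (by decide) _ _ _).mp hlead

end ChartTwo

theorem chartTwo_presentation_general (k : Type) [Field k] (r a : ℕ)
    (ha1 : 1 ≤ a) (har : a ≤ r) [IsDomain (Cring k r)]
    (t : FractionRing (Cring k r))
    (ht : t = algebraMap (Cring k r) (FractionRing (Cring k r)) (xone k r) /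
        algebraMap (Cring k r) (FractionRing (Cring k r)) (xthree k r) ^ a)
    (ε₂ : Polynomial (MvPowerSeries (Fin 3) k) →+* FractionRing (Cring k r))
    (hε₂ : ε₂ = Polynomial.eval₂RingHom
        ((algebraMap (Cring k r) (FractionRing (Cring k r))).comp
          (Ideal.Quotient.mk (nodalRelation k r))) t) :
    RingHom.ker ε₂ = chartTwoRelation k r a ∧
      Nonempty ((Algebra.adjoin (Cring k r) ({t} : Set (FractionRing (Cring k r)))) ≃+*
        chartTwo k r a) := by
  have hx := toFrac_X_two_ne_zero (k := k) (r := r) (by omega)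
  have hxt : toFrac k r (X 2) ^ a * t = toFrac k r (X 0) := by
    rw [show t = toFrac k r (X 0) / toFrac k r (X 2) ^ a from ht]
    exact mul_div_cancel₀ _ (pow_ne_zero a hx)
  subst hε₂
  have hker : RingHom.ker (eval₂RingHom (toFrac k r) t) = chartTwoRelation k r a :=
    ker_eq_of_leadingCoeff_reducible _ (chartTwoRelation_le_ker har hx hxt)
      (fun c hc => map_C_nodalRelation_le har <| Ideal.mem_map_of_mem _ <| by
        rw [← ker_toFrac, RingHom.mem_ker]; simpa using hc)
      (fun f hf =>
        exists_C_mul_X_sub_C_mem_chartTwoRelation (leadingCoeff_mem_span_of_mem_ker har hxt hf))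
  refine ⟨hker, ⟨?_⟩⟩
  exact (RingEquiv.subringCongr
      (range_eval₂RingHom_comp_eq_adjoin Ideal.Quotient.mk_surjective t)).symm.trans
    ((RingHom.quotientKerEquivRange _).symm.trans (Ideal.quotEquivOfEq hker))

/-- Presentation of the second blow-up chart (from the proof of Proposition 4.2): the `P`-algebra
homomorphism `ε₂ : P[Y] → K = Frac(C_r)` extending `P → C_r → K` and sending `Y ↦ x₁ / x₃^a`
has kernel exactly `(X₁ − X₃^a·Y, X₃^(r−a) − Y·X₂)`; consequently the `C_r`-subalgebra of `K`
generated by `x₁ / x₃^a` is isomorphic to `A₂(a)`. -/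
theorem chartTwo_presentation (k : Type) [Field k] [IsAlgClosed k] (r a : ℕ)
    (ha1 : 1 ≤ a) (har : a ≤ r) [IsDomain (Cring k r)]
    (t : FractionRing (Cring k r))
    (ht : t = algebraMap (Cring k r) (FractionRing (Cring k r)) (xone k r) /
        algebraMap (Cring k r) (FractionRing (Cring k r)) (xthree k r) ^ a)
    (ε₂ : Polynomial (MvPowerSeries (Fin 3) k) →+* FractionRing (Cring k r))
    (hε₂ : ε₂ = Polynomial.eval₂RingHom
        ((algebraMap (Cring k r) (FractionRing (Cring k r))).comp
          (Ideal.Quotient.mk (nodalRelation k r))) t) :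
    RingHom.ker ε₂ = chartTwoRelation k r a ∧
      Nonempty ((Algebra.adjoin (Cring k r) ({t} : Set (FractionRing (Cring k r)))) ≃+*
        chartTwo k r a) :=
  chartTwo_presentation_general k r a ha1 har t ht ε₂ hε₂
end
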